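/- Let P ⊆ ℝ² be a two-dimensional canonical Fano polytope. If x, y are lattice points on the boundary of P that are not contained in a common facet of P and satisfy x + y ≠ 0, then {x, y} is a ℤ-basis of ℤ². Consequently, every two-dimensional terminal Fano polytope is a smooth Fano polytope, and every two-dimensional canonical Fano polytope is a reflexive polytope. -/

import Mathlib

open scoped BigOperators

noncomputable section

/-- The standard dot product on `ℝ^d`. -/
def dotProd {d : ℕ} (x y : Fin d → ℝ) : ℝ := ∑ i, x i * y i

/-- A point of `ℝ^d` is a lattice point (element of `ℤ^d`) if all coordinates are integers. -/
def IsLatticePoint {d : ℕ} (x : Fin d → ℝ) : Prop := ∀ i, ∃ n : ℤ, x i = (n : ℝ)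

/-- A lattice polytope is the convex hull of finitely many lattice points. -/
def IsLatticePolytope {d : ℕ} (P : Set (Fin d → ℝ)) : Prop :=
  ∃ V : Finset (Fin d → ℝ), (∀ v ∈ V, IsLatticePoint v) ∧ P = convexHull ℝ (V : Set (Fin d → ℝ))

/-- The dual polytope `P* = {y | ⟨x,y⟩ ≥ -1 ∀ x ∈ P}`. -/
def dualPolytope {d : ℕ} (P : Set (Fin d → ℝ)) : Set (Fin d → ℝ) :=
  {y | ∀ x ∈ P, -1 ≤ dotProd x y}

/-- A reflexive polytope: a full-dimensional lattice polytope with `0` in its interior whose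
dual polytope is again a lattice polytope. -/
def IsReflexive {d : ℕ} (P : Set (Fin d → ℝ)) : Prop :=
  IsLatticePolytope P ∧ (0 : Fin d → ℝ) ∈ interior P ∧ IsLatticePolytope (dualPolytope P)

/-- A face of `P`: the subset of `P` where some linear functional attains its maximum bound. -/
def IsFace {d : ℕ} (P F : Set (Fin d → ℝ)) : Prop :=
  ∃ (u : Fin d → ℝ) (c : ℝ), (∀ x ∈ P, dotProd u x ≤ c) ∧ F = {x ∈ P | dotProd u x = c}

/-- A facet of a `d`-dimensional polytope: a nonempty face of dimension `d - 1`. -/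
def IsFacet {d : ℕ} (P F : Set (Fin d → ℝ)) : Prop :=
  IsFace P F ∧ F.Nonempty ∧ Module.finrank ℝ (vectorSpan ℝ F) = d - 1

/-- `x ∼ y` : `x` and `y` lie in a common facet of `P`. -/
def SameFacet {d : ℕ} (P : Set (Fin d → ℝ)) (x y : Fin d → ℝ) : Prop :=
  ∃ F, IsFacet P F ∧ x ∈ F ∧ y ∈ F

/-- The star set of `x`: the union of all facets of `P` containing `x`. -/
def starSet {d : ℕ} (P : Set (Fin d → ℝ)) (x : Fin d → ℝ) : Set (Fin d → ℝ) :=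
  {y | SameFacet P x y}

/-- A family of lattice points forming a `ℤ`-basis of the lattice `ℤ^d`. -/
def IsZBasisFamily {d n : ℕ} (s : Fin n → (Fin d → ℝ)) : Prop :=
  LinearIndependent ℝ s ∧ (∀ i, IsLatticePoint (s i)) ∧
    ∀ z : Fin d → ℝ, IsLatticePoint z → ∃ c : Fin n → ℤ, z = ∑ i, (c i : ℝ) • s i

/-- A primitive lattice point: a nonzero lattice point such that no lattice point lies
strictly between `0` and it. -/
def IsPrimitivePoint {d : ℕ} (x : Fin d → ℝ) : Prop :=
  IsLatticePoint x ∧ x ≠ 0 ∧ ∀ y ∈ openSegment ℝ (0 : Fin d → ℝ) x, ¬ IsLatticePoint y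

/-- A Fano polytope: a full-dimensional lattice polytope with `0` in its interior all of whose
vertices are primitive lattice points. -/
def IsFanoPolytope {d : ℕ} (P : Set (Fin d → ℝ)) : Prop :=
  IsLatticePolytope P ∧ (0 : Fin d → ℝ) ∈ interior P ∧
    ∀ v ∈ Set.extremePoints ℝ P, IsPrimitivePoint v

/-- Canonical: the only interior lattice point is the origin. -/
def IsCanonicalPolytope {d : ℕ} (P : Set (Fin d → ℝ)) : Prop :=
  {x ∈ interior P | IsLatticePoint x} = {0}

/-- Terminal: the only lattice points of `P` are the origin and the vertices. -/
def IsTerminalPolytope {d : ℕ} (P : Set (Fin d → ℝ)) : Prop :=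
  {x ∈ P | IsLatticePoint x} = insert (0 : Fin d → ℝ) (Set.extremePoints ℝ P)

/-- Simplicial: every facet has exactly `d` vertices. -/
def IsSimplicial {d : ℕ} (P : Set (Fin d → ℝ)) : Prop :=
  ∀ F, IsFacet P F → (Set.extremePoints ℝ F).ncard = d

/-- Smooth: the vertices of every facet form a `ℤ`-basis of the lattice. -/
def IsSmoothPolytope {d : ℕ} (P : Set (Fin d → ℝ)) : Prop :=
  ∀ F, IsFacet P F → ∃ s : Fin d → (Fin d → ℝ),
    Set.extremePoints ℝ F = Set.range s ∧ IsZBasisFamily s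

/-- Semi-terminal: any two distinct vertices in a common facet are joined by a lattice-point
free segment. -/
def IsSemiTerminal {d : ℕ} (P : Set (Fin d → ℝ)) : Prop :=
  ∀ v ∈ Set.extremePoints ℝ P, ∀ w ∈ Set.extremePoints ℝ P, v ≠ w → SameFacet P v w →
    {x ∈ segment ℝ v w | IsLatticePoint x} = {v, w}

/-- The quotient space `ℝ^d / ℝv`. -/
abbrev QuotSpace {d : ℕ} (v : Fin d → ℝ) := (Fin d → ℝ) ⧸ (Submodule.span ℝ {v})

/-- The canonical projection `π_v : ℝ^d → ℝ^d/ℝv`. -/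
def projAlong {d : ℕ} (v : Fin d → ℝ) : (Fin d → ℝ) →ₗ[ℝ] QuotSpace v :=
  (Submodule.span ℝ {v}).mkQ

/-- The quotient lattice `ℤ^d/ℤv`, regarded as the image of `ℤ^d` in `ℝ^d/ℝv`. -/
def quotLattice {d : ℕ} (v : Fin d → ℝ) : Set (QuotSpace v) :=
  projAlong v '' {x | IsLatticePoint x}

/-- A primitive point of the quotient lattice `ℤ^d/ℤv`. -/
def QuotPrimitive {d : ℕ} (v : Fin d → ℝ) (q : QuotSpace v) : Prop :=
  q ∈ quotLattice v ∧ q ≠ 0 ∧ ∀ t ∈ openSegment ℝ (0 : QuotSpace v) q, t ∉ quotLattice v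

/-- A Fano polytope in the quotient space `ℝ^d/ℝv` with respect to the lattice `ℤ^d/ℤv`. -/
def QuotIsFanoPolytope {d : ℕ} (v : Fin d → ℝ) (Q : Set (QuotSpace v)) : Prop :=
  (∃ V : Finset (QuotSpace v), (∀ q ∈ V, q ∈ quotLattice v) ∧
      Q = convexHull ℝ (V : Set (QuotSpace v))) ∧
  (0 : QuotSpace v) ∈ interior Q ∧
  ∀ q ∈ Set.extremePoints ℝ Q, QuotPrimitive v q

/-- Unimodular equivalence: a real linear isomorphism mapping lattice onto lattice and one
polytope onto the other. -/
def LatticeEquivTo {d e : ℕ} (P : Set (Fin d → ℝ)) (Q : Set (Fin e → ℝ)) : Prop :=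
  ∃ f : (Fin d → ℝ) ≃ₗ[ℝ] (Fin e → ℝ),
    (∀ x, IsLatticePoint x ↔ IsLatticePoint (f x)) ∧ f '' P = Q

/-- The hexagon `Z₂ = conv(±(1,0), ±(0,1), ±(1,1)) ⊆ ℝ²`. -/
def Z2 : Set (Fin 2 → ℝ) :=
  convexHull ℝ ({![1,0], ![0,1], ![1,1], ![-1,0], ![0,-1], ![-1,-1]} : Set (Fin 2 → ℝ))

/-- The `j`-th coordinate pair of a point of `ℝ^{2m}`. -/
def pairCoords {m : ℕ} (x : Fin (2 * m) → ℝ) (j : Fin m) : Fin 2 → ℝ :=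
  fun i => x ⟨2 * (j : ℕ) + (i : ℕ), by have := j.isLt; have := i.isLt; omega⟩

/-- The `m`-fold product `Z₂ × ⋯ × Z₂ ⊆ ℝ^{2m}`. -/
def prodZ2 (m : ℕ) : Set (Fin (2 * m) → ℝ) := {x | ∀ j : Fin m, pairCoords x j ∈ Z2}

/-- The `j`-th coordinate pair of a point of `ℝ^{2m+1}` (first `2m` coordinates). -/
def pairCoords' {m : ℕ} (x : Fin (2 * m + 1) → ℝ) (j : Fin m) : Fin 2 → ℝ :=
  fun i => x ⟨2 * (j : ℕ) + (i : ℕ), by have := j.isLt; have := i.isLt; omega⟩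

/-- The product `[-1,1] × Z₂ × ⋯ × Z₂ ⊆ ℝ^{2m+1}` with `m` hexagon factors. -/
def boxProdZ2 (m : ℕ) : Set (Fin (2 * m + 1) → ℝ) :=
  {x | x ⟨2 * m, by omega⟩ ∈ Set.Icc (-1 : ℝ) 1 ∧ ∀ j : Fin m, pairCoords' x j ∈ Z2}

/-!
Two linearly independent lattice points `x, y` form a `ℤ`-basis as soon as the triangle
`conv {0, x, y}` contains no lattice points besides its vertices: otherwise reducing a lattice point
modulo `ℤx + ℤy`, and reflecting it through the midpoint of `[x, y]` if necessary, yields one.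
In a canonical polygon every lattice point of that triangle other than `0` lies on the edge
`[x, y]`; if `x` and `y` share no facet, the open edge `(x, y)` lies in the interior, where the
only lattice point is `0`.

Each facet of a Fano polygon is a segment `[v, w]` between two vertices. For a terminal polygon
the triangle over a facet is empty, which gives smoothness. For a canonical one, the triangle over
`v` and the next lattice point on the facet is empty, so the facet normal scaled to take the value
`1` on the facet is integral. These integral normals generate the dual polygon: a point `y₀` of
`P*` outside their convex hull is separated from it by some `q`, and the boundary point `x` of `P`
in the direction `-q` then has `⟨x, y₀⟩ < -1`.
-/

open Set Filter Topology Module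

lemma dotProd_eq_dotProduct {d : ℕ} (u x : Fin d → ℝ) : dotProd u x = u ⬝ᵥ x := rfl

lemma exists_dotProd_eq {d : ℕ} (f : Dual ℝ (Fin d → ℝ)) : ∃ u, ∀ p, dotProd u p = f p :=
  ⟨(dotProductEquiv ℝ (Fin d)).symm f, fun p => by
    rw [dotProd_eq_dotProduct, ← dotProductEquiv_apply_apply,
      LinearEquiv.apply_symm_apply]⟩

lemma continuous_dotProd {d : ℕ} (u : Fin d → ℝ) : Continuous (dotProd u) :=
  (dotProductEquiv ℝ (Fin d) u).continuous_of_finiteDimensional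

lemma isLatticePoint_iff_mem_span {d : ℕ} {x : Fin d → ℝ} :
    IsLatticePoint x ↔ x ∈ Submodule.span ℤ (range (Pi.basisFun ℝ (Fin d))) := by
  simp [(Pi.basisFun ℝ (Fin d)).mem_span_iff_repr_mem ℤ, IsLatticePoint, eq_comm]

namespace IsLatticePoint

variable {d : ℕ} {x y : Fin d → ℝ}

lemma add (hx : IsLatticePoint x) (hy : IsLatticePoint y) : IsLatticePoint (x + y) :=
  isLatticePoint_iff_mem_span.2 <|
    add_mem (isLatticePoint_iff_mem_span.1 hx) (isLatticePoint_iff_mem_span.1 hy)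

lemma neg (hx : IsLatticePoint x) : IsLatticePoint (-x) :=
  isLatticePoint_iff_mem_span.2 <| neg_mem (isLatticePoint_iff_mem_span.1 hx)

lemma sub (hx : IsLatticePoint x) (hy : IsLatticePoint y) : IsLatticePoint (x - y) :=
  sub_eq_add_neg x y ▸ hx.add hy.neg

lemma intCast_smul (hx : IsLatticePoint x) (n : ℤ) : IsLatticePoint ((n : ℝ) • x) := by
  rw [Int.cast_smul_eq_zsmul]
  exact isLatticePoint_iff_mem_span.2 <| zsmul_mem (isLatticePoint_iff_mem_span.1 hx) n

end IsLatticePoint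

lemma Bornology.IsBounded.finite_setOf_isLatticePoint {d : ℕ} {s : Set (Fin d → ℝ)}
    (hs : Bornology.IsBounded s) : {x ∈ s | IsLatticePoint x}.Finite :=
  (ZSpan.setFinite_inter (Pi.basisFun ℝ (Fin d)) hs).subset
    fun _ hx => ⟨hx.1, isLatticePoint_iff_mem_span.1 hx.2⟩

section ConvexBody

variable {E : Type*} [NormedAddCommGroup E] [NormedSpace ℝ E] {P : Set E}

lemma Convex.smul_mem_interior_of_lt_one (hP : Convex ℝ P) (h0 : 0 ∈ interior P) {p : E}
    (hp : p ∈ P) {t : ℝ} (ht0 : 0 ≤ t) (ht1 : t < 1) : t • p ∈ interior P := by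
  simpa using hP.combo_interior_self_mem_interior h0 hp (sub_pos.2 ht1) ht0 (sub_add_cancel 1 t)

lemma Convex.exists_pos_smul_mem_frontier (hP : Convex ℝ P) (hb : Bornology.IsBounded P)
    (h0 : 0 ∈ interior P) {q : E} (hq : q ≠ 0) : ∃ t : ℝ, 0 < t ∧ t • q ∈ frontier P := by
  have hnhds : P ∈ 𝓝 0 := mem_interior_iff_mem_nhds.1 h0
  have hg : 0 < gauge P q :=
    (gauge_pos (absorbent_nhds_zero hnhds) (NormedSpace.isVonNBounded_iff ℝ |>.2 hb)).2 hq
  refine ⟨(gauge P q)⁻¹, inv_pos.2 hg, (gauge_eq_one_iff_mem_frontier hP hnhds).1 ?_⟩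
  rw [gauge_smul_of_nonneg (inv_nonneg.2 hg.le), smul_eq_mul, inv_mul_cancel₀ hg.ne']

lemma Convex.exists_le_of_notMem_interior (hP : Convex ℝ P) (hne : (interior P).Nonempty)
    {x : E} (hx : x ∉ interior P) : ∃ f : E →L[ℝ] ℝ, f ≠ 0 ∧ ∀ p ∈ P, f p ≤ f x := by
  obtain ⟨f, hf⟩ := geometric_hahn_banach_open_point hP.interior isOpen_interior hx
  obtain ⟨a, ha⟩ := hne
  refine ⟨f, fun h => by simpa [h] using hf a ha, fun p hp => ?_⟩
  have hcl : closure (interior P) ⊆ {p | f p ≤ f x} :=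
    closure_minimal (fun a ha => (hf a ha).le) (isClosed_le f.continuous continuous_const)
  rw [hP.closure_interior_eq_closure_of_nonempty_interior ⟨a, ha⟩] at hcl
  exact hcl (subset_closure hp)

end ConvexBody

section Segment

variable {E : Type*} [NormedAddCommGroup E] [NormedSpace ℝ E]

lemma isCompact_segment (v w : E) : IsCompact (segment ℝ v w) :=
  convexHull_pair (𝕜 := ℝ) v w ▸ (toFinite {v, w}).isCompact_convexHull (𝕜 := ℝ)

lemma left_mem_extremePoints_segment {v w : E} (hvw : v ≠ w) :
    v ∈ extremePoints ℝ (segment ℝ v w) := by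
  refine ⟨left_mem_segment ℝ v w, ?_⟩
  rintro x₁ hx₁ x₂ hx₂ ⟨a, b, ha, hb, hab, hv⟩
  rw [segment_eq_image'] at hx₁ hx₂
  obtain ⟨s, ⟨hs, -⟩, rfl⟩ := hx₁
  obtain ⟨s', ⟨hs', -⟩, rfl⟩ := hx₂
  obtain rfl : a = 1 - b := by linarith
  have hzero : ((1 - b) * s + b * s') • (w - v) = 0 :=
    calc ((1 - b) * s + b * s') • (w - v)
        = (1 - b) • (v + s • (w - v)) + b • (v + s' • (w - v)) - v := by module
      _ = 0 := by rw [hv, sub_self]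
  have hs0 : s = 0 := by
    have := (smul_eq_zero.1 hzero).resolve_right (sub_ne_zero.2 hvw.symm)
    nlinarith [mul_nonneg hb.le hs']
  simp [hs0]

lemma extremePoints_segment {v w : E} (hvw : v ≠ w) :
    extremePoints ℝ (segment ℝ v w) = {v, w} := by
  refine Subset.antisymm (convexHull_pair (𝕜 := ℝ) v w ▸ extremePoints_convexHull_subset)
    (insert_subset (left_mem_extremePoints_segment hvw) (singleton_subset_iff.2 ?_))
  exact segment_symm ℝ v w ▸ left_mem_extremePoints_segment hvw.symm

lemma IsCompact.exists_eq_segment_of_finrank_vectorSpan_eq_one {F : Set E} (hc : IsCompact F)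
    (hconv : Convex ℝ F) (h : finrank ℝ (vectorSpan ℝ F) = 1) :
    ∃ v w, v ≠ w ∧ F = segment ℝ v w := by
  obtain ⟨⟨d, hd⟩, hd0, hspan⟩ := finrank_eq_one_iff'.1 h
  replace hd0 : d ≠ 0 := fun h => hd0 (Subtype.ext h)
  obtain ⟨g, hg⟩ := SeparatingDual.exists_eq_one (R := ℝ) hd0
  -- `g` is an affine coordinate on the line spanned by `F`
  have hdiff : ∀ p ∈ F, ∀ q ∈ F, p - q = (g p - g q) • d := by
    intro p hp q hq
    obtain ⟨c, hc⟩ := hspan ⟨p - q, vsub_mem_vectorSpan ℝ hp hq⟩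
    have hpq : p - q = c • d := (congrArg Subtype.val hc).symm
    rw [hpq, ← map_sub, hpq, map_smul, hg, smul_eq_mul, mul_one]
  have hne : F.Nonempty := by
    by_contra hF
    rw [not_nonempty_iff_eq_empty.1 hF, vectorSpan_empty, finrank_bot] at h
    exact zero_ne_one h
  obtain ⟨v, hv, hvmin⟩ := hc.exists_isMinOn hne g.continuous.continuousOn
  obtain ⟨w, hw, hwmax⟩ := hc.exists_isMaxOn hne g.continuous.continuousOn
  have hlt : g v < g w := by
    refine (hvmin hw).lt_of_ne fun hgvw => hd0 ?_
    have hsub : F ⊆ {v} := fun p hp => by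
      have h₁ : g v ≤ g p := hvmin hp
      have h₂ : g p ≤ g w := hwmax hp
      rw [mem_singleton_iff, ← sub_eq_zero, hdiff p hp v hv, show g p - g v = 0 by linarith,
        zero_smul]
    have := vectorSpan_mono ℝ hsub hd
    rwa [vectorSpan_singleton, Submodule.mem_bot] at this
  refine ⟨v, w, fun h => hlt.ne (h ▸ rfl), Subset.antisymm (fun p hp => ?_)
    (hconv.segment_subset hv hw)⟩
  rw [segment_eq_image']
  have hp₁ : g p ≤ g w := hwmax hp
  refine ⟨(g p - g v) / (g w - g v), ⟨div_nonneg (sub_nonneg.2 (hvmin hp)) (sub_nonneg.2 hlt.le),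
    div_le_one_of_le₀ (by linarith) (sub_nonneg.2 hlt.le)⟩, ?_⟩
  dsimp only
  rw [hdiff w hw v hv, smul_smul, div_mul_cancel₀ _ (sub_ne_zero.2 hlt.ne'), ← hdiff p hp v hv,
    add_sub_cancel]

end Segment

section Dual

variable {d : ℕ} {P : Set (Fin d → ℝ)}

lemma exists_dotProd_le_of_notMem_interior (hP : Convex ℝ P) (h0 : 0 ∈ interior P)
    {x : Fin d → ℝ} (hx : x ∉ interior P) :
    ∃ u, u ≠ 0 ∧ ∀ p ∈ P, dotProd u p ≤ dotProd u x := by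
  obtain ⟨f, hf0, hf⟩ := hP.exists_le_of_notMem_interior ⟨0, h0⟩ hx
  obtain ⟨u, hu⟩ := exists_dotProd_eq (f : Dual ℝ (Fin d → ℝ))
  refine ⟨u, fun h => hf0 (ContinuousLinearMap.ext fun p => ?_), fun p hp => ?_⟩
  · simpa [h, dotProd_eq_dotProduct] using (hu p).symm
  · simpa [hu] using hf p hp

lemma pos_of_forall_dotProd_le (h0 : 0 ∈ interior P) {u : Fin d → ℝ} (hu : u ≠ 0) {c : ℝ}
    (hb : ∀ p ∈ P, dotProd u p ≤ c) : 0 < c := by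
  have hev : ∀ᶠ t : ℝ in 𝓝 0, t • u ∈ P := by
    have : Tendsto (fun t : ℝ => t • u) (𝓝 0) (𝓝 0) := by
      simpa using (continuous_id.smul continuous_const).tendsto (0 : ℝ) (f := fun t : ℝ => t • u)
    exact this (mem_interior_iff_mem_nhds.1 h0)
  obtain ⟨t, htP, ht⟩ := ((hev.filter_mono nhdsWithin_le_nhds).and
    (self_mem_nhdsWithin (s := Ioi (0 : ℝ)))).exists
  have huu : 0 < u ⬝ᵥ u := by simpa using Matrix.dotProduct_self_star_pos_iff.2 hu
  have := hb _ htP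
  rw [dotProd_eq_dotProduct, dotProduct_smul, smul_eq_mul] at this
  nlinarith

lemma convex_dualPolytope : Convex ℝ (dualPolytope P) := by
  intro y₁ hy₁ y₂ hy₂ a b ha hb hab x hx
  have h₁ := hy₁ x hx
  have h₂ := hy₂ x hx
  simp only [dotProd_eq_dotProduct, dotProduct_add, dotProduct_smul, smul_eq_mul] at h₁ h₂ ⊢
  nlinarith

lemma isBounded_dualPolytope (h0 : 0 ∈ interior P) : Bornology.IsBounded (dualPolytope P) := by
  obtain ⟨ε, hε, hball⟩ := Metric.mem_nhds_iff.1 (mem_interior_iff_mem_nhds.1 h0)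
  refine isBounded_iff_forall_norm_le.2 ⟨2 / ε, fun y hy => ?_⟩
  refine (pi_norm_le_iff_of_nonneg (by positivity)).2 fun i => ?_
  have key : ∀ s : ℝ, |s| < ε → -1 ≤ s * y i := fun s hs => by
    have hmem : s • Pi.single i 1 ∈ P := hball (by simpa [norm_smul, Pi.norm_single] using hs)
    simpa [dotProd_eq_dotProduct, dotProduct_comm, dotProduct_single] using hy _ hmem
  have h1 := key (ε / 2) (by rw [abs_of_pos (by positivity)]; linarith)
  have h2 := key (-(ε / 2)) (by rw [abs_neg, abs_of_pos (by positivity)]; linarith)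
  rw [Real.norm_eq_abs, le_div_iff₀ hε]
  cases abs_cases (y i) <;> nlinarith

lemma isExtreme_setOf_dotProd_eq {u : Fin d → ℝ} {c : ℝ} (hb : ∀ p ∈ P, dotProd u p ≤ c) :
    IsExtreme ℝ P {p ∈ P | dotProd u p = c} := by
  refine ⟨sep_subset _ _, ?_⟩
  rintro x₁ hx₁ x₂ hx₂ z ⟨-, hzc⟩ ⟨a, b, ha, hb', hab, rfl⟩
  have h₁ := hb x₁ hx₁
  have h₂ := hb x₂ hx₂
  simp only [dotProd_eq_dotProduct, dotProduct_add, dotProduct_smul, smul_eq_mul] at hzc h₁ h₂ ⊢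
  have hc : a * c + b * c = c := by rw [← add_mul, hab, one_mul]
  have : a * c ≤ a * (u ⬝ᵥ x₁) := by linarith [mul_le_mul_of_nonneg_left h₂ hb'.le]
  exact mem_sep hx₁ (le_antisymm h₁ (le_of_mul_le_mul_left this ha))

end Dual

lemma dotProd_le_of_mem_convexHull {d : ℕ} {S : Set (Fin d → ℝ)} {u : Fin d → ℝ} {c : ℝ}
    (hb : ∀ v ∈ S, dotProd u v ≤ c) : ∀ p ∈ convexHull ℝ S, dotProd u p ≤ c :=
  fun _ hp => convexHull_min hb (convex_halfSpace_le (dotProductEquiv ℝ (Fin d) u).isLinear c) hp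

lemma dualPolytope_subset_convexHull {d : ℕ} [NeZero d] {P S : Set (Fin d → ℝ)}
    (hP : Convex ℝ P) (hPc : IsCompact P) (h0 : 0 ∈ interior P) (hS : S.Finite)
    (hsupp : ∀ x ∈ frontier P, ∃ y ∈ S, dotProd x y = -1) :
    dualPolytope P ⊆ convexHull ℝ S := by
  intro y₀ hy₀
  by_contra hy
  obtain ⟨f, B, hfS, hBy⟩ := geometric_hahn_banach_closed_point (convex_convexHull ℝ S)
    (hS.isCompact_convexHull (𝕜 := ℝ)).isClosed hy
  obtain ⟨q, hq⟩ := exists_dotProd_eq (f : Dual ℝ (Fin d → ℝ))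
  have hfS' : ∀ y ∈ S, dotProd q y < B := fun y hy => by
    simpa [hq] using hfS y (subset_convexHull ℝ S hy)
  have hBy' : B < dotProd q y₀ := by simpa [hq] using hBy
  have hq0 : q ≠ 0 := by
    rintro rfl
    obtain ⟨t, -, ht⟩ := hP.exists_pos_smul_mem_frontier hPc.isBounded h0
      (Pi.single_ne_zero_iff.2 one_ne_zero : Pi.single (0 : Fin d) (1 : ℝ) ≠ 0)
    obtain ⟨y, hyS, -⟩ := hsupp _ ht
    have h₁ := hfS' y hyS
    simp only [dotProd_eq_dotProduct, zero_dotProduct] at h₁ hBy'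
    linarith
  obtain ⟨t, ht, hx⟩ := hP.exists_pos_smul_mem_frontier hPc.isBounded h0 (neg_ne_zero.2 hq0)
  obtain ⟨y, hyS, hxy⟩ := hsupp _ hx
  have h₁ := hfS' y hyS
  have h₂ := hy₀ _ (hPc.isClosed.frontier_subset hx)
  simp only [dotProd_eq_dotProduct, smul_dotProduct, neg_dotProduct, smul_eq_mul] at hxy h₁ h₂ hBy'
  nlinarith

section Triangle

variable {E : Type*} [AddCommGroup E] [Module ℝ E]

lemma exists_mem_segment_of_mem_convexHull {x y z : E} (hz : z ∈ convexHull ℝ {0, x, y}) :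
    ∃ m ∈ segment ℝ x y, z ∈ segment ℝ 0 m := by
  rw [convexHull_insert (insert_nonempty x {y}), convexHull_pair,
    convexJoin_singleton_left] at hz
  simpa using hz

lemma smul_add_smul_mem_convexHull (x y : E) {a b : ℝ} (ha : 0 ≤ a) (hb : 0 ≤ b)
    (hab : a + b ≤ 1) : a • x + b • y ∈ convexHull ℝ {0, x, y} := by
  have := (convex_convexHull ℝ ({0, x, y} : Set E)).sum_mem (t := Finset.univ)
    (w := ![1 - a - b, a, b]) (z := ![0, x, y])
    (fun i _ => by fin_cases i <;> simp <;> linarith)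
    (by simp [Fin.sum_univ_three]; ring)
    (fun i _ => subset_convexHull ℝ _ (by fin_cases i <;> simp))
  simpa [Fin.sum_univ_three] using this

end Triangle

lemma isZBasisFamily_of_parallelogram {x y : Fin 2 → ℝ} (hx : IsLatticePoint x)
    (hy : IsLatticePoint y) (hxy : LinearIndependent ℝ ![x, y])
    (hpar : ∀ a b : ℝ, 0 ≤ a → a < 1 → 0 ≤ b → b < 1 → IsLatticePoint (a • x + b • y) →
      a = 0 ∧ b = 0) :
    IsZBasisFamily ![x, y] := by
  refine ⟨hxy, fun i => by fin_cases i <;> simpa, fun z hz => ?_⟩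
  have hspan : Submodule.span ℝ {x, y} = ⊤ := by
    rw [Set.pair_comm]
    simpa [Matrix.range_cons_cons_empty] using hxy.span_eq_top_of_card_eq_finrank (by simp)
  obtain ⟨α, β, rfl⟩ := Submodule.mem_span_pair.1 (hspan ▸ Submodule.mem_top (x := z))
  have hr : IsLatticePoint (Int.fract α • x + Int.fract β • y) := by
    have : Int.fract α • x + Int.fract β • y =
        α • x + β • y - ((⌊α⌋ : ℝ) • x + (⌊β⌋ : ℝ) • y) := by
      simp only [Int.fract]; module
    rw [this]
    exact hz.sub ((hx.intCast_smul _).add (hy.intCast_smul _))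
  obtain ⟨hα, hβ⟩ := hpar _ _ (Int.fract_nonneg α) (Int.fract_lt_one α) (Int.fract_nonneg β)
    (Int.fract_lt_one β) hr
  refine ⟨![⌊α⌋, ⌊β⌋], ?_⟩
  simp only [Fin.sum_univ_two, Matrix.cons_val_zero, Matrix.cons_val_one]
  rw [← Int.floor_add_fract α, ← Int.floor_add_fract β, hα, hβ]
  simp

lemma isZBasisFamily_of_empty_triangle {x y : Fin 2 → ℝ} (hx : IsLatticePoint x)
    (hy : IsLatticePoint y) (hxy : LinearIndependent ℝ ![x, y])
    (hT : ∀ z ∈ convexHull ℝ {0, x, y}, IsLatticePoint z → z = 0 ∨ z = x ∨ z = y) :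
    IsZBasisFamily ![x, y] := by
  have hvert : ∀ s t : ℝ, 0 ≤ s → 0 ≤ t → s + t ≤ 1 → IsLatticePoint (s • x + t • y) →
      (s = 0 ∨ s = 1) ∧ (t = 0 ∨ t = 1) := by
    intro s t hs ht hst hl
    rcases hT _ (smul_add_smul_mem_convexHull x y hs ht hst) hl with h | h | h
    · have := hxy.eq_of_pair (s' := 0) (t' := 0) (by simpa using h)
      exact ⟨.inl this.1, .inl this.2⟩
    · have := hxy.eq_of_pair (s' := 1) (t' := 0) (by simpa using h)
      exact ⟨.inr this.1, .inl this.2⟩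
    · have := hxy.eq_of_pair (s' := 0) (t' := 1) (by simpa using h)
      exact ⟨.inl this.1, .inr this.2⟩
  refine isZBasisFamily_of_parallelogram hx hy hxy fun a b ha ha1 hb hb1 hr => ?_
  by_cases hab : a + b ≤ 1
  · obtain ⟨h₁, h₂⟩ := hvert a b ha hb hab hr
    exact ⟨h₁.resolve_right ha1.ne, h₂.resolve_right hb1.ne⟩
  -- otherwise the reflection of the point through the midpoint of `[x, y]` lies in the triangle
  have hr' : IsLatticePoint ((1 - a) • x + (1 - b) • y) := by
    have : (1 - a) • x + (1 - b) • y = x + y - (a • x + b • y) := by module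
    rw [this]
    exact (hx.add hy).sub hr
  obtain ⟨h₁, -⟩ := hvert _ _ (by linarith) (by linarith) (by linarith) hr'
  rcases h₁ with h₁ | h₁ <;> linarith

lemma linearIndependent_pair_of_dotProd_eq {d : ℕ} {u v w : Fin d → ℝ} {c : ℝ} (hc : c ≠ 0)
    (hv : dotProd u v = c) (hw : dotProd u w = c) (hvw : v ≠ w) :
    LinearIndependent ℝ ![v, w] := by
  refine LinearIndependent.pair_iff.2 fun s t hst => ?_
  have hsum : (s + t) * c = 0 := by
    have := congrArg (dotProd u) hst
    simp only [dotProd_eq_dotProduct, dotProduct_add, dotProduct_smul, smul_eq_mul,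
      dotProduct_zero] at this hv hw
    rw [hv, hw] at this
    linarith
  obtain rfl : t = -s := by linarith [(mul_eq_zero.1 hsum).resolve_right hc]
  have : s • (v - w) = 0 := by rw [← hst]; module
  have hs := (smul_eq_zero.1 this).resolve_right (sub_ne_zero.2 hvw)
  simp [hs]

lemma IsZBasisFamily.isLatticePoint_of_dotProd {d n : ℕ} {s : Fin n → Fin d → ℝ}
    (hs : IsZBasisFamily s) {y : Fin d → ℝ} (hy : ∀ i, ∃ k : ℤ, dotProd y (s i) = k) :
    IsLatticePoint y := by
  choose k hk using hy
  intro j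
  obtain ⟨c, hc⟩ := hs.2.2 (Pi.single j 1) fun i => ⟨(Pi.single j 1 : Fin d → ℤ) i, by
    by_cases h : i = j
    · subst h; simp
    · simp [h]⟩
  refine ⟨∑ i, c i * k i, ?_⟩
  have := congrArg (dotProd y) hc
  simp only [dotProd_eq_dotProduct, dotProduct_single, mul_one, dotProduct_sum,
    dotProduct_smul, smul_eq_mul] at this hk
  simp [this, hk]

lemma exists_isLatticePoint_mem_segment {d : ℕ} {v w : Fin d → ℝ} (hw : IsLatticePoint w)
    (hvw : v ≠ w) :
    ∃ p ∈ segment ℝ v w, p ≠ v ∧ IsLatticePoint p ∧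
      ∀ z ∈ segment ℝ v p, IsLatticePoint z → z = v ∨ z = p := by
  have hbdd : Bornology.IsBounded (segment ℝ v w \ {v}) :=
    (isCompact_segment v w).isBounded.subset sdiff_subset
  obtain ⟨p, ⟨⟨hpvw, hpv⟩, hpl⟩, hmin⟩ := exists_min_image _ (dist v)
    hbdd.finite_setOf_isLatticePoint ⟨w, ⟨right_mem_segment ℝ v w, hvw.symm⟩, hw⟩
  refine ⟨p, hpvw, hpv, hpl, fun z hz hzl => or_iff_not_imp_left.2 fun hzv => ?_⟩
  have hle := hmin z ⟨⟨(convex_segment v w).segment_subset (left_mem_segment ℝ v w) hpvw hz,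
    hzv⟩, hzl⟩
  have := dist_add_dist_of_mem_segment hz
  exact dist_le_zero.1 (by linarith)

namespace IsCanonicalPolytope

variable {d : ℕ} {P : Set (Fin d → ℝ)}

lemma eq_zero (hcan : IsCanonicalPolytope P) {z : Fin d → ℝ} (hz : z ∈ interior P)
    (hzl : IsLatticePoint z) : z = 0 := by
  have : z ∈ {x ∈ interior P | IsLatticePoint x} := ⟨hz, hzl⟩
  rwa [hcan] at this

lemma eq_zero_or_eq_of_mem_segment (hcan : IsCanonicalPolytope P) (hP : Convex ℝ P)
    (h0 : 0 ∈ interior P) {m z : Fin d → ℝ} (hm : m ∈ P) (hz : z ∈ segment ℝ 0 m)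
    (hzl : IsLatticePoint z) : z = 0 ∨ z = m := by
  obtain ⟨a, b, ha, hb, hab, rfl⟩ := hz
  rcases (show b ≤ 1 by linarith).lt_or_eq with hb1 | rfl
  · left
    simpa using hcan.eq_zero (hP.smul_mem_interior_of_lt_one h0 hm hb hb1) (by simpa using hzl)
  · right
    simp [show a = 0 by linarith]

end IsCanonicalPolytope

namespace IsTerminalPolytope

lemma eq_zero_or_mem_extremePoints {d : ℕ} {P : Set (Fin d → ℝ)} (hterm : IsTerminalPolytope P)
    {z : Fin d → ℝ} (hz : z ∈ P) (hzl : IsLatticePoint z) : z = 0 ∨ z ∈ extremePoints ℝ P := by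
  have : z ∈ {x ∈ P | IsLatticePoint x} := ⟨hz, hzl⟩
  rwa [hterm] at this

end IsTerminalPolytope

-- Tilt the supporting functional `u` in the direction `w` until it meets a further point of `V`.
lemma Finset.exists_tilt {d : ℕ} (V : Finset (Fin d → ℝ)) {u w : Fin d → ℝ} {c : ℝ}
    (hb : ∀ v ∈ V, dotProd u v ≤ c) (hw : ∃ v ∈ V, 0 < dotProd w v) :
    ∃ t : ℝ, ∃ v₀ ∈ V, 0 < dotProd w v₀ ∧ (∀ v ∈ V, dotProd (u + t • w) v ≤ c) ∧
      dotProd (u + t • w) v₀ = c := by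
  set Vpos := V.filter (fun v => 0 < dotProd w v)
  have hne : Vpos.Nonempty := by simpa [Vpos, Finset.filter_nonempty_iff] using hw
  obtain ⟨v₀, hv₀, hmin⟩ :=
    Vpos.exists_min_image (fun v => (c - dotProd u v) / dotProd w v) hne
  simp only [Vpos, Finset.mem_filter] at hv₀ hmin
  set t := (c - dotProd u v₀) / dotProd w v₀
  have hdot : ∀ v, dotProd (u + t • w) v = dotProd u v + t * dotProd w v := fun v => by
    simp [dotProd_eq_dotProduct, add_dotProduct, smul_dotProduct]
  refine ⟨t, v₀, hv₀.1, hv₀.2, fun v hv => ?_, ?_⟩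
  · rw [hdot]
    by_cases hwv : 0 < dotProd w v
    · have := hmin v ⟨hv, hwv⟩
      rw [le_div_iff₀ hwv] at this
      linarith
    · have ht : 0 ≤ t := div_nonneg (sub_nonneg.2 (hb v₀ hv₀.1)) hv₀.2.le
      nlinarith [hb v hv]
  · rw [hdot, div_mul_cancel₀ _ hv₀.2.ne']
    ring

section Plane

variable {P : Set (Fin 2 → ℝ)}

lemma finrank_vectorSpan_setOf_dotProd_eq_le_one {u : Fin 2 → ℝ} (hu : u ≠ 0) (c : ℝ) :
    finrank ℝ (vectorSpan ℝ {p ∈ P | dotProd u p = c}) ≤ 1 := by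
  set f := dotProductEquiv ℝ (Fin 2) u
  have hker : finrank ℝ (LinearMap.ker f) = 1 := by
    have := Module.Dual.finrank_ker_add_one_of_ne_zero
      ((dotProductEquiv ℝ (Fin 2)).map_ne_zero_iff.2 hu)
    simpa using this
  refine hker ▸ Submodule.finrank_mono ?_
  rw [vectorSpan_def, Submodule.span_le]
  rintro _ ⟨p, hp, q, hq, rfl⟩
  simp [f, ← dotProd_eq_dotProduct, dotProduct_sub, hp.2, hq.2]

lemma isFacet_setOf_dotProd_eq {u : Fin 2 → ℝ} (hu : u ≠ 0) {c : ℝ}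
    (hb : ∀ p ∈ P, dotProd u p ≤ c) {x y : Fin 2 → ℝ} (hx : x ∈ P) (hy : y ∈ P) (hxy : x ≠ y)
    (hcx : dotProd u x = c) (hcy : dotProd u y = c) :
    IsFacet P {p ∈ P | dotProd u p = c} := by
  refine ⟨⟨u, c, hb, rfl⟩, ⟨x, hx, hcx⟩, le_antisymm
    (finrank_vectorSpan_setOf_dotProd_eq_le_one hu c) (Submodule.one_le_finrank_iff.2 ?_)⟩
  refine fun hbot => hxy.symm (vsub_eq_zero_iff_eq.1 ?_)
  simpa [hbot] using vsub_mem_vectorSpan ℝ (show y ∈ {p ∈ P | dotProd u p = c} from ⟨hy, hcy⟩)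
    (show x ∈ {p ∈ P | dotProd u p = c} from ⟨hx, hcx⟩)

lemma sameFacet_of_mem_openSegment (hP : Convex ℝ P) (h0 : 0 ∈ interior P)
    {x y z : Fin 2 → ℝ} (hx : x ∈ P) (hy : y ∈ P) (hxy : x ≠ y) (hz : z ∈ openSegment ℝ x y)
    (hzi : z ∉ interior P) : SameFacet P x y := by
  obtain ⟨u, hu, hb⟩ := exists_dotProd_le_of_notMem_interior hP h0 hzi
  have hext := isExtreme_setOf_dotProd_eq hb
  have hzF : z ∈ {p ∈ P | dotProd u p = dotProd u z} :=
    ⟨hP.openSegment_subset hx hy hz, rfl⟩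
  have hxF := hext.left_mem_of_mem_openSegment hx hy hzF hz
  have hyF := hext.left_mem_of_mem_openSegment hy hx hzF (openSegment_symm ℝ x y ▸ hz)
  exact ⟨_, isFacet_setOf_dotProd_eq hu hb hx hy hxy hxF.2 hyF.2, hxF, hyF⟩

lemma exists_isFacet_mem_of_mem_frontier {V : Finset (Fin 2 → ℝ)}
    (hPV : P = convexHull ℝ ↑V) (h0 : 0 ∈ interior P) {x : Fin 2 → ℝ} (hx : x ∈ frontier P) :
    ∃ F, IsFacet P F ∧ x ∈ F := by
  have hP : Convex ℝ P := hPV ▸ convex_convexHull ℝ _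
  have hPc : IsCompact P := by rw [hPV]; exact V.finite_toSet.isCompact_convexHull (𝕜 := ℝ)
  have hxP : x ∈ P := hPc.isClosed.frontier_subset hx
  have hx0 : x ≠ 0 := fun h => hx.2 (h ▸ h0)
  obtain ⟨u, hu, hb⟩ := exists_dotProd_le_of_notMem_interior hP h0 hx.2
  have hc := pos_of_forall_dotProd_le h0 hu hb
  -- `w` is orthogonal to `x`, so tilting `u` along `w` keeps `x` on the supporting line
  set w : Fin 2 → ℝ := ![-x 1, x 0]
  have hwx : dotProd w x = 0 := by
    simp [w, dotProd, Fin.sum_univ_two]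
    ring
  have hw0 : w ≠ 0 := fun h => hx0 (by
    have h₀ := congrFun h 0
    have h₁ := congrFun h 1
    simp only [w, Matrix.cons_val_zero, Matrix.cons_val_one, Pi.zero_apply] at h₀ h₁
    ext i; fin_cases i <;> simp [h₁, neg_eq_zero.1 h₀])
  have hwV : ∃ v ∈ V, 0 < dotProd w v := by
    by_contra! hV
    have := pos_of_forall_dotProd_le h0 hw0 (hPV ▸ dotProd_le_of_mem_convexHull hV)
    exact lt_irrefl 0 this
  obtain ⟨t, v₀, hv₀, hwv₀, hbV, hv₀c⟩ :=
    V.exists_tilt (fun v hv => hb v (hPV ▸ subset_convexHull ℝ _ hv)) hwV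
  have hxc : dotProd (u + t • w) x = dotProd u x := by
    rw [dotProd_eq_dotProduct, add_dotProduct, smul_dotProduct, ← dotProd_eq_dotProduct w, hwx,
      smul_zero, add_zero, dotProd_eq_dotProduct]
  have hu' : u + t • w ≠ 0 := fun h => hc.ne (by simpa [h, dotProd_eq_dotProduct] using hxc)
  refine ⟨_, isFacet_setOf_dotProd_eq hu' (hPV ▸ dotProd_le_of_mem_convexHull hbV)
    hxP (hPV ▸ subset_convexHull ℝ _ hv₀) (fun h => ?_) hxc hv₀c, hxP, hxc⟩
  rw [← h, hwx] at hwv₀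
  exact lt_irrefl 0 hwv₀

lemma IsFacet.exists_eq_segment (hP : Convex ℝ P) (hPc : IsCompact P) (h0 : 0 ∈ interior P)
    {F : Set (Fin 2 → ℝ)} (hF : IsFacet P F) :
    ∃ u c, 0 < c ∧ (∀ p ∈ P, dotProd u p ≤ c) ∧ F = {p ∈ P | dotProd u p = c} ∧
      ∃ v w, v ≠ w ∧ F = segment ℝ v w := by
  obtain ⟨⟨u, c, hb, rfl⟩, ⟨p₀, hp₀⟩, hrank⟩ := hF
  have hu : u ≠ 0 := by
    rintro rfl
    have hface : {p ∈ P | dotProd 0 p = c} = P := by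
      ext p
      simp [dotProd_eq_dotProduct, ← hp₀.2]
    have htop : vectorSpan ℝ P = ⊤ := AffineSubspace.vectorSpan_eq_top_of_affineSpan_eq_top ℝ _ _
      ((Convex.interior_nonempty_iff_affineSpan_eq_top hP).1 ⟨0, h0⟩)
    rw [hface, htop, finrank_top, Module.finrank_fin_fun] at hrank
    exact absurd hrank (by norm_num)
  refine ⟨u, c, pos_of_forall_dotProd_le h0 hu hb, hb, rfl, ?_⟩
  refine IsCompact.exists_eq_segment_of_finrank_vectorSpan_eq_one
    (hPc.inter_right (isClosed_eq (continuous_dotProd u) continuous_const))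
    (hP.inter (convex_hyperplane (dotProductEquiv ℝ (Fin 2) u).isLinear c)) hrank

end Plane

namespace IsFanoPolytope

section

variable {d : ℕ} {P : Set (Fin d → ℝ)}

lemma convex (hFano : IsFanoPolytope P) : Convex ℝ P := by
  obtain ⟨⟨V, -, rfl⟩, -⟩ := hFano
  exact convex_convexHull ℝ _

lemma isCompact (hFano : IsFanoPolytope P) : IsCompact P := by
  obtain ⟨⟨V, -, rfl⟩, -⟩ := hFano
  exact V.finite_toSet.isCompact_convexHull (𝕜 := ℝ)

lemma zero_mem_interior (hFano : IsFanoPolytope P) : 0 ∈ interior P :=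
  hFano.2.1

lemma isLatticePoint_of_mem_extremePoints (hFano : IsFanoPolytope P) {v : Fin d → ℝ}
    (hv : v ∈ extremePoints ℝ P) : IsLatticePoint v :=
  (hFano.2.2 v hv).1

lemma mem_of_mem_frontier (hFano : IsFanoPolytope P) {x : Fin d → ℝ} (hx : x ∈ frontier P) :
    x ∈ P :=
  hFano.isCompact.isClosed.frontier_subset hx

lemma linearIndependent_of_mem_frontier (hFano : IsFanoPolytope P)
    (hcan : IsCanonicalPolytope P) {x y : Fin d → ℝ} (hx : x ∈ frontier P)
    (hy : y ∈ frontier P) (hxl : IsLatticePoint x) (hyl : IsLatticePoint y) (hxy : x ≠ y)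
    (hsum : x + y ≠ 0) : LinearIndependent ℝ ![x, y] := by
  -- up to sign, such an `a • p` would be a nonzero lattice point in the interior
  have key : ∀ p ∈ P, ∀ q ∈ frontier P, IsLatticePoint q → ∀ a : ℝ, |a| < 1 → a • p ≠ q := by
    rintro p hp q hq hql a ha rfl
    have hint :=
      hFano.convex.smul_mem_interior_of_lt_one hFano.zero_mem_interior hp (abs_nonneg a) ha
    rcases abs_choice a with h | h <;> rw [h] at hint
    · exact hq.2 hint
    · have := hcan.eq_zero hint (by simpa using hql.neg)
      rw [neg_smul, neg_eq_zero] at this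
      exact hq.2 (this ▸ hFano.zero_mem_interior)
  have hx0 : x ≠ 0 := fun h => hx.2 (h ▸ hFano.zero_mem_interior)
  refine (LinearIndependent.pair_iff' hx0).2 fun a hax => ?_
  rcases lt_trichotomy |a| 1 with ha | ha | ha
  · exact key x (hFano.mem_of_mem_frontier hx) y hy hyl a ha hax
  · rcases (abs_eq zero_le_one).1 ha with rfl | rfl
    · exact hxy (by simpa using hax)
    · exact hsum (by rw [← hax]; simp)
  · have ha0 : a ≠ 0 := by rintro rfl; norm_num at ha
    refine key y (hFano.mem_of_mem_frontier hy) x hx hxl a⁻¹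
      (by rw [abs_inv]; exact inv_lt_one_of_one_lt₀ ha) ?_
    rw [← hax, smul_smul, inv_mul_cancel₀ ha0, one_smul]

end

variable {P : Set (Fin 2 → ℝ)}

lemma exists_isFacet_mem (hFano : IsFanoPolytope P) {x : Fin 2 → ℝ} (hx : x ∈ frontier P) :
    ∃ F, IsFacet P F ∧ x ∈ F := by
  obtain ⟨⟨V, -, hPV⟩, h0, -⟩ := hFano
  exact exists_isFacet_mem_of_mem_frontier hPV h0 hx

lemma exists_eq_segment_of_isFacet (hFano : IsFanoPolytope P) {F : Set (Fin 2 → ℝ)}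
    (hF : IsFacet P F) :
    ∃ u c, 0 < c ∧ (∀ p ∈ P, dotProd u p ≤ c) ∧ F = {p ∈ P | dotProd u p = c} ∧
      ∃ v w, v ≠ w ∧ F = segment ℝ v w ∧ IsLatticePoint v ∧ IsLatticePoint w := by
  obtain ⟨u, c, hc, hb, hFeq, v, w, hvw, hFvw⟩ :=
    hF.exists_eq_segment hFano.convex hFano.isCompact hFano.zero_mem_interior
  have hext : extremePoints ℝ F ⊆ extremePoints ℝ P :=
    (hFeq ▸ isExtreme_setOf_dotProd_eq hb).extremePoints_subset_extremePoints
  have hEF : extremePoints ℝ F = {v, w} := hFvw ▸ extremePoints_segment hvw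
  refine ⟨u, c, hc, hb, hFeq, v, w, hvw, hFvw, ?_, ?_⟩
  · exact hFano.isLatticePoint_of_mem_extremePoints (hext (hEF ▸ mem_insert v {w}))
  · exact hFano.isLatticePoint_of_mem_extremePoints (hext (hEF ▸ mem_insert_of_mem v rfl))

theorem isZBasisFamily_of_not_sameFacet (hFano : IsFanoPolytope P)
    (hcan : IsCanonicalPolytope P) {x y : Fin 2 → ℝ} (hx : x ∈ frontier P)
    (hy : y ∈ frontier P) (hxl : IsLatticePoint x) (hyl : IsLatticePoint y)
    (hxy : ¬ SameFacet P x y) (hsum : x + y ≠ 0) : IsZBasisFamily ![x, y] := by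
  have hne : x ≠ y := by
    rintro rfl
    obtain ⟨F, hF, hxF⟩ := hFano.exists_isFacet_mem hx
    exact hxy ⟨F, hF, hxF, hxF⟩
  have hli := hFano.linearIndependent_of_mem_frontier hcan hx hy hxl hyl hne hsum
  have hP := hFano.convex
  have h0 := hFano.zero_mem_interior
  have hxP := hFano.mem_of_mem_frontier hx
  have hyP := hFano.mem_of_mem_frontier hy
  refine isZBasisFamily_of_empty_triangle hxl hyl hli fun z hz hzl => ?_
  obtain ⟨m, hm, hzm⟩ := exists_mem_segment_of_mem_convexHull hz
  rcases hcan.eq_zero_or_eq_of_mem_segment hP h0 (hP.segment_subset hxP hyP hm) hzm hzl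
    with rfl | rfl
  · exact .inl rfl
  by_cases hzx : z = x
  · exact .inr (.inl hzx)
  by_cases hzy : z = y
  · exact .inr (.inr hzy)
  have hzo := mem_openSegment_of_ne_left_right (Ne.symm hzx) (Ne.symm hzy) hm
  by_cases hzi : z ∈ interior P
  · obtain ⟨a, b, ha, hb, -, hab⟩ := hzo
    rw [hcan.eq_zero hzi hzl] at hab
    exact absurd (LinearIndependent.pair_iff.1 hli a b hab).1 ha.ne'
  · exact (hxy (sameFacet_of_mem_openSegment hP h0 hxP hyP hne hzo hzi)).elim

theorem isSmoothPolytope (hFano : IsFanoPolytope P) (hterm : IsTerminalPolytope P) :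
    IsSmoothPolytope P := by
  intro F hF
  obtain ⟨u, c, hc, hb, hFeq, v, w, hvw, hFvw, hvl, hwl⟩ := hFano.exists_eq_segment_of_isFacet hF
  have hvF : v ∈ F := hFvw ▸ left_mem_segment ℝ v w
  have hwF : w ∈ F := hFvw ▸ right_mem_segment ℝ v w
  rw [hFeq] at hvF hwF
  refine ⟨![v, w], by rw [hFvw, extremePoints_segment hvw]; simp [pair_comm], ?_⟩
  refine isZBasisFamily_of_empty_triangle hvl hwl
    (linearIndependent_pair_of_dotProd_eq hc.ne' hvF.2 hwF.2 hvw) fun z hz hzl => ?_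
  have hTP : convexHull ℝ {0, v, w} ⊆ P :=
    convexHull_min (insert_subset (interior_subset hFano.zero_mem_interior)
      (insert_subset hvF.1 (singleton_subset_iff.2 hwF.1))) hFano.convex
  rcases hterm.eq_zero_or_mem_extremePoints (hTP hz) hzl with rfl | hzE
  · exact .inl rfl
  · simpa using extremePoints_convexHull_subset
      (inter_extremePoints_subset_extremePoints_of_subset hTP ⟨hz, hzE⟩)

lemma exists_isLatticePoint_dotProd_eq_one (hFano : IsFanoPolytope P)
    (hcan : IsCanonicalPolytope P) {F : Set (Fin 2 → ℝ)} (hF : IsFacet P F) :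
    ∃ y, IsLatticePoint y ∧ (∀ p ∈ P, dotProd y p ≤ 1) ∧ ∀ p ∈ F, dotProd y p = 1 := by
  obtain ⟨u, c, hc, hb, hFeq, v, w, hvw, hFvw, hvl, hwl⟩ := hFano.exists_eq_segment_of_isFacet hF
  obtain ⟨p, hp, hpv, hpl, hvp⟩ := exists_isLatticePoint_mem_segment hwl hvw
  have hFP : F ⊆ P := hFeq ▸ sep_subset _ _
  have hvF : v ∈ F := hFvw ▸ left_mem_segment ℝ v w
  have hpF : p ∈ F := hFvw ▸ hp
  have hdot : ∀ q ∈ F, dotProd u q = c := fun q hq => by rw [hFeq] at hq; exact hq.2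
  have hbasis : IsZBasisFamily ![v, p] := by
    refine isZBasisFamily_of_empty_triangle hvl hpl (linearIndependent_pair_of_dotProd_eq hc.ne'
      (hdot v hvF) (hdot p hpF) hpv.symm) fun z hz hzl => ?_
    obtain ⟨m, hm, hzm⟩ := exists_mem_segment_of_mem_convexHull hz
    have hmF : m ∈ F := hFvw ▸ (convex_segment v w).segment_subset (left_mem_segment ℝ v w) hp hm
    rcases hcan.eq_zero_or_eq_of_mem_segment hFano.convex hFano.zero_mem_interior (hFP hmF) hzm hzl
      with rfl | rfl
    · exact .inl rfl
    · exact .inr (hvp z hm hzl)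
  have hy : ∀ q, dotProd (c⁻¹ • u) q = c⁻¹ * dotProd u q := fun q => by
    simp [dotProd_eq_dotProduct, smul_dotProduct]
  refine ⟨c⁻¹ • u, hbasis.isLatticePoint_of_dotProd fun i => ⟨1, ?_⟩, fun q hq => ?_,
    fun q hq => ?_⟩
  · fin_cases i <;> simp [hy, hdot v hvF, hdot p hpF, hc.ne']
  · rw [hy, inv_mul_le_iff₀ hc, mul_one]
    exact hb q hq
  · rw [hy, hdot q hq, inv_mul_cancel₀ hc.ne']

theorem isReflexive (hFano : IsFanoPolytope P) (hcan : IsCanonicalPolytope P) :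
    IsReflexive P := by
  have hS := (isBounded_dualPolytope hFano.zero_mem_interior).finite_setOf_isLatticePoint
  refine ⟨hFano.1, hFano.zero_mem_interior, hS.toFinset, fun y hy => ((hS.mem_toFinset).1 hy).2, ?_⟩
  rw [hS.coe_toFinset]
  refine Subset.antisymm (dualPolytope_subset_convexHull hFano.convex hFano.isCompact
    hFano.zero_mem_interior hS fun x hx => ?_) (convexHull_min (sep_subset _ _) convex_dualPolytope)
  obtain ⟨F, hF, hxF⟩ := hFano.exists_isFacet_mem hx
  obtain ⟨y, hyl, hyP, hyF⟩ := hFano.exists_isLatticePoint_dotProd_eq_one hcan hF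
  refine ⟨-y, ⟨fun p hp => ?_, hyl.neg⟩, ?_⟩
  · have := hyP p hp
    simp only [dotProd_eq_dotProduct, dotProduct_comm p, neg_dotProduct] at this ⊢
    linarith
  · have := hyF x hxF
    simp only [dotProd_eq_dotProduct, dotProduct_comm x, neg_dotProduct] at this ⊢
    rw [this]

end IsFanoPolytope

/-- In a two-dimensional canonical Fano polytope, two boundary lattice points
not lying in a common facet and not opposite form a `ℤ`-basis of `ℤ²`; consequently every
two-dimensional terminal Fano polytope is smooth, and every two-dimensional canonical Fano
polytope is reflexive. -/
theorem dim_two_basis_lemma (P : Set (Fin 2 → ℝ))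
    (hFano : IsFanoPolytope P) (hcan : IsCanonicalPolytope P) :
    (∀ x y : Fin 2 → ℝ, x ∈ frontier P → y ∈ frontier P →
      IsLatticePoint x → IsLatticePoint y →
      ¬ SameFacet P x y → x + y ≠ 0 → IsZBasisFamily ![x, y]) ∧
    (∀ Q : Set (Fin 2 → ℝ), IsFanoPolytope Q → IsTerminalPolytope Q → IsSmoothPolytope Q) ∧
    (∀ Q : Set (Fin 2 → ℝ), IsFanoPolytope Q → IsCanonicalPolytope Q → IsReflexive Q) :=
  ⟨fun _ _ hx hy hxl hyl hxy hsum =>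
      hFano.isZBasisFamily_of_not_sameFacet hcan hx hy hxl hyl hxy hsum,
    fun _ hQ hterm => hQ.isSmoothPolytope hterm,
    fun _ hQ hcanQ => hQ.isReflexive hcanQ⟩

end
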